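/- Let (T,κ) be a finite tree (a connected digital image whose underlying graph is connected and acyclic) and let A be the set of vertices of T of degree 1. Then A is an (m,m)-limiting set for (T,κ) for each m ∈ {0,1}; and for m = 1, A is a minimal (1,1)-limiting set if and only if #T ≠ 2. -/

import Mathlib

/-- A function between digital images (graphs) is digitally continuous if adjacent
points map to equal or adjacent points. -/
def DigContinuous {V W : Type*} (G : SimpleGraph V) (H : SimpleGraph W) (f : V → W) : Prop :=
  ∀ x y : V, G.Adj x y → f x = f y ∨ H.Adj (f x) (f y)

/-- `f` restricted to `A` is an `m`-map: it moves each point of `A` a graph distance of at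
most `m`. -/
def IsMMapOn {V : Type*} (G : SimpleGraph V) (f : V → V) (A : Set V) (m : ℕ) : Prop :=
  ∀ a ∈ A, G.dist a (f a) ≤ m

/-- `A` is an `(m,n)`-limiting set for `(X,κ)`: every continuous self-map whose restriction
to `A` is an `m`-map is an `n`-map. -/
def IsLimiting {V : Type*} (G : SimpleGraph V) (A : Set V) (m n : ℕ) : Prop :=
  ∀ f : V → V, DigContinuous G G f → IsMMapOn G f A m → IsMMapOn G f Set.univ n

/-- `A` is a minimal `(m,n)`-limiting set: it is limiting and no proper subset is. -/
def IsMinimalLimiting {V : Type*} (G : SimpleGraph V) (A : Set V) (m n : ℕ) : Prop :=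
  IsLimiting G A m n ∧ ∀ B : Set V, B ⊂ A → ¬ IsLimiting G B m n

/-!
A continuous self-map of a connected graph is nonexpansive. In a finite tree, any vertex `x`
with `f x ≠ x` lies on the path from some leaf `a` to `f x`, so
`d(a, x) + d(x, f x) = d(a, f x) ≤ d(a, f a) + d(f a, f x) ≤ m + d(a, x)`.
Conversely, if a leaf `a` is left out of `A` and its neighbour `b` has another neighbour `c`
(which happens exactly when the tree has more than two vertices), moving `a` to `c` and fixing
everything else is continuous, fixes `A`, and moves `a` by 2. With only two vertices every
self-map is a 1-map, so already `∅` is (1,1)-limiting.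
-/

open SimpleGraph

namespace SimpleGraph

variable {V : Type*} {G : SimpleGraph V}

lemma IsAcyclic.length_eq_dist_of_isPath (hG : G.IsAcyclic) {u v : V} {p : G.Walk u v}
    (hp : p.IsPath) : p.length = G.dist u v := by
  obtain ⟨q, hq, hql⟩ := p.reachable.exists_path_of_dist
  rw [← hql, Subtype.mk.inj ((hG.subsingleton_path u v).elim ⟨p, hp⟩ ⟨q, hq⟩)]

lemma dist_lt_card [Fintype V] (u v : V) : G.dist u v < Fintype.card V := by
  by_cases h : G.Reachable u v
  · obtain ⟨p, hp, hpl⟩ := h.exists_path_of_dist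
    exact hpl ▸ hp.length_lt
  · rw [dist_eq_zero_of_not_reachable h]
    exact Fintype.card_pos_iff.mpr ⟨u⟩

/-- A vertex farthest from `y` among those whose path to `y` passes through `x` is a leaf. -/
lemma IsTree.exists_degree_eq_one_dist_eq_add [Fintype V] [DecidableRel G.Adj]
    (hT : G.IsTree) {x y : V} (hxy : x ≠ y) :
    ∃ a, G.degree a = 1 ∧ G.dist a y = G.dist a x + G.dist x y := by
  classical
  obtain ⟨a, ha, hmax⟩ :=
    (Finset.univ.filter fun a => G.dist a y = G.dist a x + G.dist x y).exists_max_image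
      (G.dist · y) ⟨x, by simp⟩
  simp only [Finset.mem_filter, Finset.mem_univ, true_and] at ha hmax
  refine ⟨a, ?_, ha⟩
  have hay : a ≠ y := by
    rintro rfl
    have := hT.connected.pos_dist_of_ne hxy
    rw [dist_self, dist_comm] at ha
    omega
  obtain ⟨p, hp, hpl⟩ := hT.connected.exists_path_of_dist a y
  have hnil : ¬p.Nil := fun h => hay h.eq
  rw [degree_eq_one_iff_existsUnique_adj]
  refine ⟨p.snd, p.adj_snd hnil, fun u hu => hT.isAcyclic.eq_snd_of_adj_start hp hu ?_⟩
  by_contra hup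
  have hlen :=
    hT.isAcyclic.length_eq_dist_of_isPath (hp.cons hup : (Walk.cons hu.symm p).IsPath)
  rw [Walk.length_cons, hpl] at hlen
  have hux := hT.connected.dist_triangle (u := u) (v := a) (w := x)
  rw [dist_eq_one_iff_adj.mpr hu.symm] at hux
  have huy := hT.connected.dist_triangle (u := u) (v := x) (w := y)
  have := hmax u (by omega)
  omega

lemma Connected.exists_adj_ne_of_forall_adj_eq (hconn : G.Connected) {a b c : V}
    (huniq : ∀ u, G.Adj a u → u = b) (hca : c ≠ a) (hcb : c ≠ b) : ∃ d, G.Adj b d ∧ d ≠ a := by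
  obtain ⟨p⟩ := hconn b c
  obtain ⟨d, -, hd, hd'⟩ := p.exists_boundary_dart {a, b} (by simp) (by simp [hca, hcb])
  simp only [Set.mem_insert_iff, Set.mem_singleton_iff, not_or] at hd hd'
  rcases hd with h | h
  · exact absurd (huniq _ (h ▸ d.adj)) hd'.2
  · exact ⟨d.snd, h ▸ d.adj, hd'.1⟩

end SimpleGraph

section Limiting

variable {V W : Type*} {G : SimpleGraph V} {H : SimpleGraph W}

lemma DigContinuous.exists_walk_length_le {f : V → W} (hf : DigContinuous G H f) {x y : V}
    (p : G.Walk x y) : ∃ q : H.Walk (f x) (f y), q.length ≤ p.length := by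
  induction p with
  | nil => exact ⟨.nil, le_rfl⟩
  | @cons u v w huv p ih =>
    obtain ⟨q, hq⟩ := ih
    rcases hf u v huv with he | ha
    · exact ⟨q.copy he.symm rfl, by simp only [Walk.length_copy, Walk.length_cons]; omega⟩
    · exact ⟨.cons ha q, by simp only [Walk.length_cons]; omega⟩

lemma DigContinuous.dist_le {f : V → W} (hf : DigContinuous G H f) {x y : V}
    (h : G.Reachable x y) : H.dist (f x) (f y) ≤ G.dist x y := by
  obtain ⟨p, hp⟩ := h.exists_walk_length_eq_dist
  obtain ⟨q, hq⟩ := hf.exists_walk_length_le p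
  exact (SimpleGraph.dist_le q).trans (hp ▸ hq)

lemma digContinuous_update_id_of_forall_adj_eq [DecidableEq V] {a b c : V}
    (huniq : ∀ u, G.Adj a u → u = b) (hbc : G.Adj b c) :
    DigContinuous G G (Function.update id a c) := by
  have hba : b ≠ a := by
    rintro rfl
    exact hbc.ne (huniq c hbc).symm
  intro x y hxy
  right
  by_cases hx : x = a
  · subst hx
    obtain rfl := huniq y hxy
    simpa [Function.update_of_ne hba] using hbc.symm
  by_cases hy : y = a
  · subst hy
    obtain rfl := huniq x hxy.symm
    simpa [Function.update_of_ne hba] using hbc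
  simpa [Function.update_of_ne hx, Function.update_of_ne hy] using hxy

lemma SimpleGraph.IsTree.isLimiting_leaves [Fintype V] [DecidableRel G.Adj] (hT : G.IsTree)
    (m : ℕ) : IsLimiting G {x | G.degree x = 1} m m := by
  intro f hf hA x _
  by_cases hfx : x = f x
  · rw [← hfx, dist_self]
    exact m.zero_le
  obtain ⟨a, ha, hd⟩ := hT.exists_degree_eq_one_dist_eq_add hfx
  have h₁ := hT.connected.dist_triangle (u := a) (v := f a) (w := f x)
  have h₂ := hf.dist_le (hT.connected a x)
  have h₃ := hA a ha
  omega

lemma isLimiting_of_card_eq_two [Fintype V] (h2 : Fintype.card V = 2) (A : Set V) :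
    IsLimiting G A 1 1 := by
  intro f _ _ x _
  have := G.dist_lt_card x (f x)
  omega

lemma SimpleGraph.Connected.not_isLimiting_of_degree_eq_one_of_notMem [Fintype V]
    [DecidableRel G.Adj] (hconn : G.Connected) (hcard : Fintype.card V ≠ 2) {a : V}
    (ha : G.degree a = 1) {B : Set V} (haB : a ∉ B) : ¬IsLimiting G B 1 1 := by
  classical
  obtain ⟨b, hab, huniq⟩ := degree_eq_one_iff_existsUnique_adj.mp ha
  obtain ⟨c, hca, hcb⟩ : ∃ c, c ≠ a ∧ c ≠ b := by
    by_contra! h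
    refine hcard (Nat.card_eq_fintype_card (α := V) ▸ Nat.card_eq_two_iff.mpr ?_)
    exact ⟨a, b, hab.ne, Set.eq_univ_of_forall fun z => (eq_or_ne z a).imp_right (h z)⟩
  obtain ⟨d, hbd, hda⟩ := hconn.exists_adj_ne_of_forall_adj_eq huniq hca hcb
  intro hB
  have hfB : IsMMapOn G (Function.update id a d) B 1 := fun z hz => by
    rw [Function.update_of_ne (ne_of_mem_of_not_mem hz haB), id, dist_self]
    exact zero_le_one
  have h := hB _ (digContinuous_update_id_of_forall_adj_eq huniq hbd) hfB a trivial
  rw [Function.update_self] at h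
  have had : ¬G.Adj a d := fun h => hbd.ne (huniq d h).symm
  have := hconn.one_lt_dist_of_ne_of_not_adj hda.symm had
  omega

end Limiting

theorem stmt9 {V : Type*} [Fintype V] (G : SimpleGraph V) [DecidableRel G.Adj]
    (hT : G.IsTree) :
    (∀ m ∈ ({0, 1} : Set ℕ), IsLimiting G {x : V | G.degree x = 1} m m) ∧
    (IsMinimalLimiting G {x : V | G.degree x = 1} 1 1 ↔ Fintype.card V ≠ 2) := by
  refine ⟨fun m _ => hT.isLimiting_leaves m, ⟨fun ⟨_, hmin⟩ h2 => ?_, fun hcard => ?_⟩⟩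
  · have : Nontrivial V := Fintype.one_lt_card_iff_nontrivial.mp (by omega)
    obtain ⟨a, ha⟩ := hT.exists_vert_degree_one_of_nontrivial
    exact hmin ∅ (Set.empty_ssubset.mpr ⟨a, ha⟩) (isLimiting_of_card_eq_two h2 ∅)
  · refine ⟨hT.isLimiting_leaves 1, fun B hB => ?_⟩
    obtain ⟨a, ha, haB⟩ := Set.exists_of_ssubset hB
    exact hT.connected.not_isLimiting_of_degree_eq_one_of_notMem hcard ha haB
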